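/- arXiv:1302.3889 — 9 statements merged into one kernel-verified Lean document; each statement's English description precedes it below -/
import Mathlib

section
/- Let ℓ, r be real numbers with 0 < ℓ ≤ r and let w > 0 be a real number. Then w is achievable if and only if ⌈w/r⌉ ≤ w/ℓ. -/
/-- `w` is achievable for parameters `l ≤ r`: it is a sum of finitely many
(at least one) reals, each in `[l, r]`. -/
def Achievable (l r w : ℝ) : Prop :=
  ∃ q : ℕ, 0 < q ∧ ∃ s : Fin q → ℝ, (∀ i, l ≤ s i ∧ s i ≤ r) ∧ ∑ i, s i = w

theorem achievable_iff_ceil_le (l r w : ℝ) (hl : 0 < l) (hlr : l ≤ r) (hw : 0 < w) :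
    Achievable l r w ↔ (⌈w / r⌉ : ℝ) ≤ w / l := by
  have hr : 0 < r := hl.trans_le hlr
  constructor
  · rintro ⟨q, hq, s, hs, hsum⟩
    have hlow : (q : ℝ) * l ≤ w := by
      rw [← hsum]
      calc (q : ℝ) * l = ∑ _i : Fin q, l := by simp [mul_comm]
      _ ≤ ∑ i, s i := Finset.sum_le_sum fun i _ => (hs i).1
    have hhigh : w ≤ (q : ℝ) * r := by
      rw [← hsum]
      calc ∑ i, s i ≤ ∑ _i : Fin q, r := Finset.sum_le_sum fun i _ => (hs i).2
      _ = (q : ℝ) * r := by simp [mul_comm]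
    have h1 : (⌈w / r⌉ : ℝ) ≤ (q : ℝ) := by
      have : ⌈w / r⌉ ≤ (q : ℤ) := by
        apply Int.ceil_le.mpr
        push_cast
        exact (div_le_iff₀ hr).mpr hhigh
      exact_mod_cast this
    have h2 : (q : ℝ) ≤ w / l := (le_div_iff₀ hl).mpr hlow
    linarith
  · intro h
    have hwr : 0 < w / r := div_pos hw hr
    have hq1 : 1 ≤ ⌈w / r⌉ := Int.ceil_pos.mpr hwr
    set q : ℕ := ⌈w / r⌉.toNat with hqdef
    have hqcast : (q : ℝ) = (⌈w / r⌉ : ℝ) := by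
      have : ((⌈w / r⌉.toNat : ℤ)) = ⌈w / r⌉ := Int.toNat_of_nonneg (by omega)
      rw [hqdef]
      exact_mod_cast this
    have hqpos : 0 < q := by omega
    have hqR : (0 : ℝ) < q := by exact_mod_cast hqpos
    refine ⟨q, hqpos, fun _ => w / q, fun i => ⟨?_, ?_⟩, ?_⟩
    · rw [le_div_iff₀ hqR]
      have : (q : ℝ) ≤ w / l := hqcast ▸ h
      calc l * q ≤ l * (w / l) := by nlinarith
      _ = w := by field_simp
    · rw [div_le_iff₀ hqR]
      have : w / r ≤ (q : ℝ) := hqcast ▸ Int.le_ceil _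
      calc w = r * (w / r) := by field_simp
      _ ≤ r * q := by nlinarith
    · rw [Finset.sum_const]
      simp
      field_simp
end

section
/- Let ℓ, r be real numbers with 0 < ℓ ≤ r and let w ≥ ℓ be a real number that is not achievable. Then w* := r·⌊w/r⌋ is achievable, w* < w, and every achievable real number v with v < w satisfies v ≤ w* = r·⌊w/r⌋. In other words, r·⌊w/r⌋ is the largest achievable point below w. -/
/-!
A sum of `q` terms from `[l, r]` can be any point of `[q l, q r]` (split it into `q` equal
parts), so the achievable set is the union of the intervals `[q l, q r]`, `q ≥ 1`.
With `n = ⌊w / r⌋` we have `n r ≤ w < (n + 1) r`, and `n ≥ 1` because `[l, r]` is achievable.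
Since `w` is not achievable, `n r ≠ w` and `w` lies below the interval `[(n + 1) l, (n + 1) r]`;
every achievable `v < w` therefore lies in an interval with `q ≤ n`, i.e. `v ≤ n r`.
-/

namespace Achievable

variable {l r : ℝ}

theorem iff_exists_nat {x : ℝ} :
    Achievable l r x ↔ ∃ q : ℕ, 0 < q ∧ q * l ≤ x ∧ x ≤ q * r := by
  constructor
  · rintro ⟨q, hq, s, hs, rfl⟩
    refine ⟨q, hq, ?_, ?_⟩
    · simpa using Finset.sum_le_sum fun i (_ : i ∈ Finset.univ) => (hs i).1
    · simpa using Finset.sum_le_sum fun i (_ : i ∈ Finset.univ) => (hs i).2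
  · rintro ⟨q, hq, hlx, hxr⟩
    have hq' : (0 : ℝ) < q := Nat.cast_pos.2 hq
    refine ⟨q, hq, fun _ => x / q, fun _ => ⟨?_, ?_⟩, ?_⟩
    · rwa [le_div_iff₀' hq']
    · rwa [div_le_iff₀' hq']
    · simp [mul_div_cancel₀ x hq'.ne']

theorem of_mem_Icc {x : ℝ} (hx : x ∈ Set.Icc l r) : Achievable l r x :=
  iff_exists_nat.2 ⟨1, one_pos, by simpa using hx.1, by simpa using hx.2⟩

theorem nat_mul (hlr : l ≤ r) {q : ℕ} (hq : 0 < q) : Achievable l r (q * r) :=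
  iff_exists_nat.2 ⟨q, hq, by gcongr, le_rfl⟩

theorem lt_nat_mul_of_not {w : ℝ} (hna : ¬ Achievable l r w) {q : ℕ} (hq : 0 < q)
    (hw : w ≤ q * r) : w < q * l := by
  by_contra! h
  exact hna (iff_exists_nat.2 ⟨q, hq, h, hw⟩)

theorem le_nat_mul_of_lt {v w : ℝ} (hl : 0 ≤ l) (hr : 0 ≤ r) (hv : Achievable l r v) {n : ℕ}
    (hvw : v < w) (hw : w < (n + 1) * l) : v ≤ n * r := by
  obtain ⟨q, -, hlv, hvr⟩ := iff_exists_nat.1 hv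
  obtain hqn | hnq := le_or_gt q n
  · exact hvr.trans (by gcongr)
  · have : ((n + 1 : ℕ) : ℝ) * l ≤ q * l := by gcongr; omega
    push_cast at this
    linarith

end Achievable

theorem largest_achievable_below (l r w : ℝ) (hl : 0 < l) (hlr : l ≤ r) (hw : l ≤ w)
    (hna : ¬ Achievable l r w) :
    Achievable l r (r * (⌊w / r⌋ : ℝ)) ∧ r * (⌊w / r⌋ : ℝ) < w ∧
      ∀ v : ℝ, Achievable l r v → v < w → v ≤ r * (⌊w / r⌋ : ℝ) := by
  have hr : 0 < r := hl.trans_le hlr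
  have hrw : r < w := by
    by_contra! h
    exact hna (Achievable.of_mem_Icc ⟨hw, h⟩)
  have hwr : 0 ≤ w / r := div_nonneg (hr.trans hrw).le hr.le
  rw [← natCast_floor_eq_intCast_floor hwr, mul_comm r]
  set n := ⌊w / r⌋₊
  have hn : 0 < n := Nat.floor_pos.2 ((one_le_div hr).2 hrw.le)
  have hnw : n * r ≤ w := (le_div_iff₀ hr).1 (Nat.floor_le hwr)
  have hwn : w < (n + 1) * r := (div_lt_iff₀ hr).1 (Nat.lt_floor_add_one _)
  have hach : Achievable l r (n * r) := Achievable.nat_mul hlr hn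
  have hwl : w < (n + 1) * l := by
    simpa using Achievable.lt_nat_mul_of_not hna n.succ_pos (by simpa using hwn.le)
  exact ⟨hach, hnw.lt_of_ne fun h => hna (h ▸ hach),
    fun v hv hvw => Achievable.le_nat_mul_of_lt hl.le hr.le hv hvw hwl⟩
end

section
/- Let ℓ, r be real numbers with 0 < ℓ ≤ r and suppose ⌈1/r⌉ > 1/ℓ. If q is a positive integer and s_1, …, s_q are reals with ℓ ≤ s_i ≤ r for every i and s_1 + ⋯ + s_q ≤ 1, then s_1 + ⋯ + s_q ≤ r·⌊1/r⌋. That is, when 1 is not achievable, rectangles of widths in [ℓ, r] placed in one row can cover at most a fraction Z* = r·⌊1/r⌋ of the time axis [0,1]. -/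
theorem row_coverage_le_Zstar (l r : ℝ) (hl : 0 < l) (hlr : l ≤ r)
    (hbad : (⌈(1 : ℝ) / r⌉ : ℝ) > 1 / l)
    (q : ℕ) (hq : 0 < q) (s : Fin q → ℝ) (hs : ∀ i, l ≤ s i ∧ s i ≤ r)
    (hsum : ∑ i, s i ≤ 1) :
    ∑ i, s i ≤ r * (⌊(1 : ℝ) / r⌋ : ℝ) := by
  have hr : 0 < r := lt_of_lt_of_le hl hlr
  have hlow : (q : ℝ) * l ≤ ∑ i, s i := by
    calc (q : ℝ) * l = ∑ _i : Fin q, l := by simp [mul_comm]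
    _ ≤ ∑ i, s i := Finset.sum_le_sum fun i _ => (hs i).1
  have hhigh : ∑ i, s i ≤ (q : ℝ) * r := by
    calc ∑ i, s i ≤ ∑ _i : Fin q, r := Finset.sum_le_sum fun i _ => (hs i).2
    _ = (q : ℝ) * r := by simp [mul_comm]
  by_cases hcase : (q : ℤ) ≤ ⌊(1 : ℝ) / r⌋
  · have : (q : ℝ) ≤ (⌊(1 : ℝ) / r⌋ : ℝ) := by exact_mod_cast hcase
    calc ∑ i, s i ≤ (q : ℝ) * r := hhigh
    _ ≤ (⌊(1 : ℝ) / r⌋ : ℝ) * r := by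
        exact mul_le_mul_of_nonneg_right this hr.le
    _ = r * (⌊(1 : ℝ) / r⌋ : ℝ) := mul_comm _ _
  · exfalso
    push_neg at hcase
    have h1 : ⌈(1 : ℝ) / r⌉ ≤ ⌊(1 : ℝ) / r⌋ + 1 := Int.ceil_le_floor_add_one _
    have h2 : (⌈(1 : ℝ) / r⌉ : ℤ) ≤ (q : ℤ) := le_trans h1 hcase
    have h3 : (1 : ℝ) / l < (q : ℝ) := lt_of_lt_of_le hbad (by exact_mod_cast h2)
    have h4 : (1 : ℝ) < (q : ℝ) * l := (div_lt_iff₀ hl).mp h3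
    linarith
end

section
/- Suppose 0 < ℓ ≤ r ≤ 1 and ⌈1/r⌉ > 1/ℓ (so the pair (ℓ, r) is not in the good region), and set Z* = r·⌊1/r⌋. Then every scheduling policy π satisfies P_max^π ≥ A/Z*, where A = Σ_{i=1}^n A_i. Consequently the optimal power peak P_opt is at least A/Z*. -/
open Finset Set

/-- A scheduling policy for `n` demands with malleability parameters `l ≤ r`:
each demand `i` is supplied without interruption on `[tau i, tau i + s i] ⊆ [0,1]`,
with duration `s i ∈ [l, r]`. -/
structure Policy (l r : ℝ) (n : ℕ) where
  tau : Fin n → ℝ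
  s : Fin n → ℝ
  tau_nonneg : ∀ i, 0 ≤ tau i
  fits : ∀ i, tau i + s i ≤ 1
  s_lb : ∀ i, l ≤ s i
  s_ub : ∀ i, s i ≤ r

/-- The instantaneous power at time `t`: the sum of the consumption rates
`A i / s i` of the demands active at `t` (half-open supply intervals). -/
noncomputable def power {l r : ℝ} {n : ℕ} (A : Fin n → ℝ) (π : Policy l r n) (t : ℝ) : ℝ :=
  ∑ i : Fin n, Set.indicator (Set.Ico (π.tau i) (π.tau i + π.s i)) (fun _ => A i / π.s i) t

/-- The power peak of a policy: the supremum of the instantaneous power over `[0,1)`. -/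
noncomputable def peak {l r : ℝ} {n : ℕ} (A : Fin n → ℝ) (π : Policy l r n) : ℝ :=
  sSup (power A π '' Set.Ico (0 : ℝ) 1)

/-- The optimal power peak: the infimum of the power peaks over all policies. -/
noncomputable def Popt (l r : ℝ) (n : ℕ) (A : Fin n → ℝ) : ℝ :=
  sInf {p : ℝ | ∃ π : Policy l r n, p = peak A π}


lemma grid_mem (kZ : ℤ) (hk : 1 ≤ kZ) (τ s : ℝ) (hτ : 0 ≤ τ) (hfit : τ + s ≤ 1)
    (hs : 1/((kZ:ℝ)+1) < s) :
    ∃ m ∈ Finset.Icc (1:ℤ) kZ, (m:ℝ)/((kZ:ℝ)+1) ∈ Set.Ico τ (τ+s) := by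
  have hk1 : (1:ℝ) ≤ (kZ:ℝ) := by exact_mod_cast hk
  set K : ℝ := (kZ:ℝ)+1 with hKdef
  have hK0 : 0 < K := by simp only [hKdef]; linarith
  have hsK : 1 < s * K := by
    have := (div_lt_iff₀ hK0).mp hs
    linarith
  refine ⟨max 1 ⌈τ*K⌉, ?_, ?_, ?_⟩
  · rw [Finset.mem_Icc]
    constructor
    · exact le_max_left _ _
    · apply max_le hk
      apply Int.ceil_le.mpr
      nlinarith
  · -- τ ≤ m/K
    have h1 : τ * K ≤ ((max 1 ⌈τ*K⌉ : ℤ):ℝ) := by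
      have : τ * K ≤ ((⌈τ*K⌉:ℤ):ℝ) := Int.le_ceil _
      have h2 : ((⌈τ*K⌉:ℤ):ℝ) ≤ ((max 1 ⌈τ*K⌉ : ℤ):ℝ) := by
        exact_mod_cast le_max_right 1 ⌈τ*K⌉
      linarith
    rw [le_div_iff₀ hK0]
    linarith
  · -- m/K < τ + s
    rw [div_lt_iff₀ hK0]
    rcases le_or_gt ⌈τ*K⌉ 0 with h | h
    · have hm : max 1 ⌈τ*K⌉ = 1 := by omega
      rw [hm]
      have : τ * K ≤ 0 := le_trans (Int.le_ceil _) (by exact_mod_cast h)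
      have hτ0 : τ = 0 := by nlinarith
      push_cast
      nlinarith
    · have hm : max 1 ⌈τ*K⌉ = ⌈τ*K⌉ := by omega
      rw [hm]
      have := Int.ceil_lt_add_one (τ*K)
      push_cast
      nlinarith


theorem peak_ge_A_div_Zstar (l r : ℝ) (n : ℕ) (A : Fin n → ℝ)
    (hl : 0 < l) (hlr : l ≤ r) (hr : r ≤ 1) (hn : 1 ≤ n) (hA : ∀ i, 0 < A i)
    (hbad : (⌈(1 : ℝ) / r⌉ : ℝ) > 1 / l) :
    (∀ π : Policy l r n, (∑ i, A i) / (r * (⌊(1 : ℝ) / r⌋ : ℝ)) ≤ peak A π) ∧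
      (∑ i, A i) / (r * (⌊(1 : ℝ) / r⌋ : ℝ)) ≤ Popt l r n A := by
  have hr0 : 0 < r := lt_of_lt_of_le hl hlr
  set c : ℝ := 1 / r with hc
  have hc1 : 1 ≤ c := by rw [hc, le_div_iff₀ hr0]; linarith
  set kZ : ℤ := ⌊c⌋ with hkZ
  have hk1 : 1 ≤ kZ := by rwa [hkZ, Int.le_floor, Int.cast_one]
  have hkR1 : (1:ℝ) ≤ (kZ:ℝ) := by exact_mod_cast hk1
  have hkR0 : (0:ℝ) < (kZ:ℝ) := by linarith
  -- ⌈c⌉ = ⌊c⌋ + 1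
  have hlr' : 1 / r ≤ 1 / l := one_div_le_one_div_of_le hl hlr
  have hceil : ⌈c⌉ = kZ + 1 := by
    refine le_antisymm (Int.ceil_le_floor_add_one c) ?_
    have h1 : c < ((⌈c⌉:ℤ):ℝ) := lt_of_le_of_lt hlr' hbad
    have h2 : ((kZ:ℤ):ℝ) ≤ c := Int.floor_le c
    have : kZ < ⌈c⌉ := by exact_mod_cast lt_of_le_of_lt h2 h1
    omega
  have hlK : 1/((kZ:ℝ)+1) < l := by
    have h1 : 1 / l < (kZ:ℝ) + 1 := by
      have := hbad; rw [hceil] at this; push_cast at this; linarith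
    have h2 : 1 < ((kZ:ℝ)+1) * l := (div_lt_iff₀ hl).mp h1
    rw [div_lt_iff₀ (by linarith : (0:ℝ) < (kZ:ℝ)+1)]
    linarith
  -- main lower bound for any policy
  have main : ∀ π : Policy l r n, (∑ i, A i) / (r * (kZ:ℝ)) ≤ peak A π := by
    intro π
    have hs_pos : ∀ i, 0 < π.s i := fun i => lt_of_lt_of_le hl (π.s_lb i)
    set S : Finset ℤ := Finset.Icc (1:ℤ) kZ with hS
    have hScard : ((S.card:ℕ):ℝ) = (kZ:ℝ) := by
      rw [hS, Int.card_Icc]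
      have : (kZ + 1 - 1).toNat = kZ.toNat := by omega
      rw [this]
      exact_mod_cast Int.toNat_of_nonneg (by omega)
    have hSne : S.Nonempty := ⟨1, by rw [hS, Finset.mem_Icc]; omega⟩
    set g : ℤ → ℝ := fun m => (m:ℝ)/((kZ:ℝ)+1) with hg
    -- the grid points lie in [0,1)
    have hgmem : ∀ m ∈ S, g m ∈ Set.Ico (0:ℝ) 1 := by
      intro m hm
      rw [hS, Finset.mem_Icc] at hm
      have hm1 : (1:ℝ) ≤ (m:ℝ) := by exact_mod_cast hm.1
      have hm2 : (m:ℝ) ≤ (kZ:ℝ) := by exact_mod_cast hm.2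
      constructor
      · positivity
      · rw [hg, div_lt_one (by linarith)]; linarith
    -- the key sum inequality
    have hkey : (∑ i, A i) / r ≤ ∑ m ∈ S, power A π (g m) := by
      have h1 : (∑ i, A i) / r = ∑ i, A i / r := Finset.sum_div _ _ _
      rw [h1]
      have h2 : ∑ m ∈ S, power A π (g m)
          = ∑ i, ∑ m ∈ S, Set.indicator (Set.Ico (π.tau i) (π.tau i + π.s i))
              (fun _ => A i / π.s i) (g m) := by
        unfold power; rw [Finset.sum_comm]
      rw [h2]
      apply Finset.sum_le_sum
      intro i _
      obtain ⟨m, hmS, hmIn⟩ := grid_mem kZ hk1 (π.tau i) (π.s i) (π.tau_nonneg i)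
        (π.fits i) (lt_of_lt_of_le hlK (π.s_lb i))
      calc A i / r ≤ A i / π.s i := by
            apply div_le_div_of_nonneg_left (le_of_lt (hA i)) (hs_pos i) (π.s_ub i)
        _ = Set.indicator (Set.Ico (π.tau i) (π.tau i + π.s i))
              (fun _ => A i / π.s i) (g m) := by rw [Set.indicator_of_mem hmIn]
        _ ≤ ∑ m ∈ S, Set.indicator (Set.Ico (π.tau i) (π.tau i + π.s i))
              (fun _ => A i / π.s i) (g m) := by
            apply Finset.single_le_sum _ hmS
            intro j _
            apply Set.indicator_nonneg
            intro _ _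
            exact div_nonneg (le_of_lt (hA i)) (le_of_lt (hs_pos i))
    -- some grid point achieves the average
    have hav : ∃ m ∈ S, (∑ i, A i) / (r * (kZ:ℝ)) ≤ power A π (g m) := by
      by_contra hcon
      push_neg at hcon
      have hlt : ∑ m ∈ S, power A π (g m) < ∑ m ∈ S, (∑ i, A i) / (r * (kZ:ℝ)) :=
        Finset.sum_lt_sum_of_nonempty hSne hcon
      rw [Finset.sum_const, nsmul_eq_mul, hScard] at hlt
      have hAc : (kZ:ℝ) * ((∑ i, A i) / (r * (kZ:ℝ))) = (∑ i, A i) / r := by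
        field_simp
      rw [hAc] at hlt
      linarith
    obtain ⟨m, hmS, hmle⟩ := hav
    -- peak bounds power at the grid point
    have hbdd : BddAbove (power A π '' Set.Ico (0:ℝ) 1) := by
      refine ⟨∑ i, A i / π.s i, ?_⟩
      rintro x ⟨t, _, rfl⟩
      unfold power
      apply Finset.sum_le_sum
      intro i _
      apply Set.indicator_apply_le'
      · intro _; exact le_refl _
      · intro _; exact div_nonneg (le_of_lt (hA i)) (le_of_lt (hs_pos i))
    have hmem : power A π (g m) ∈ power A π '' Set.Ico (0:ℝ) 1 :=
      ⟨g m, hgmem m hmS, rfl⟩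
    exact le_trans hmle (le_csSup hbdd hmem)
  refine ⟨main, ?_⟩
  apply le_csInf
  · exact ⟨peak A ⟨fun _ => 0, fun _ => r, fun _ => le_refl 0,
      fun _ => by simp [hr], fun _ => hlr, fun _ => le_refl r⟩, _, rfl⟩
  · rintro p ⟨π, rfl⟩
    exact main π
end

section
/- Suppose 0 < ℓ ≤ r ≤ 1 and ℓ ≤ A_i/A ≤ r for every i ∈ {1, …, n}, where A = Σ_{i=1}^n A_i. Then the policy π* defined by s_i = A_i/A and τ_i = Σ_{j<i} s_j (demands placed side by side) is a valid scheduling policy, every demand has power intensity A_i/s_i = A, and P^{π*}(t) = A for every t ∈ [0,1); in particular P_max^{π*} = A, which is optimal. -/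
open Finset Set

/-!
Laying the demands side by side with durations `s i = A i / A` fills `[0,1)` exactly, each
instant being covered by one demand, whose rate `A i / s i` is `A`; so the power is constantly
`A`. Conversely, for any policy the power integrates over `[0,1)` to `∑ A i`, so its supremum
there is at least `A`.
-/

open MeasureTheory

theorem Monotone.biUnion_range_Ico_succ {α : Type*} [LinearOrder α] {f : ℕ → α}
    (hf : Monotone f) (n : ℕ) :
    ⋃ k ∈ Finset.range n, Ico (f k) (f (k + 1)) = Ico (f 0) (f n) := by
  induction n with
  | zero => simp
  | succ n ih =>
    rw [Finset.range_add_one, Finset.set_biUnion_insert, ih, union_comm,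
      Ico_union_Ico_eq_Ico (hf n.zero_le) (hf n.le_succ)]

theorem Monotone.sum_range_indicator_Ico_succ {α M : Type*} [LinearOrder α] [AddCommMonoid M]
    {f : ℕ → α} (hf : Monotone f) (n : ℕ) (c : M) (t : α) :
    ∑ k ∈ Finset.range n, (Ico (f k) (f (k + 1))).indicator (fun _ => c) t =
      (Ico (f 0) (f n)).indicator (fun _ => c) t := by
  rw [← hf.biUnion_range_Ico_succ n, Finset.indicator_biUnion_apply]
  exact fun i _ j _ hij => hf.pairwise_disjoint_on_Ico_succ hij

section PrefixSum

variable {M : Type*} [AddCommMonoid M] {n : ℕ}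

/-- Indexed by `k : ℕ` rather than `Fin n`, so that the partial sums form a monotone sequence. -/
def prefixSum (s : Fin n → M) (k : ℕ) : M :=
  ∑ j ∈ univ.filter (fun j : Fin n => (j : ℕ) < k), s j

@[simp]
theorem prefixSum_zero (s : Fin n → M) : prefixSum s 0 = 0 := by
  simp [prefixSum]

theorem prefixSum_self (s : Fin n → M) : prefixSum s n = ∑ i, s i := by
  simp [prefixSum]

theorem prefixSum_succ (s : Fin n → M) (i : Fin n) :
    prefixSum s (i + 1) = prefixSum s i + s i := by
  have : univ.filter (fun j : Fin n => (j : ℕ) < i + 1) =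
      insert i (univ.filter (fun j : Fin n => (j : ℕ) < i)) := by
    ext j
    simp only [Finset.mem_filter, Finset.mem_univ, true_and, Finset.mem_insert, Fin.ext_iff]
    omega
  rw [prefixSum, this, sum_insert (by simp), add_comm, prefixSum]

theorem prefixSum_mono [PartialOrder M] [IsOrderedAddMonoid M] {s : Fin n → M}
    (hs : ∀ i, 0 ≤ s i) : Monotone (prefixSum s) :=
  fun _ _ hab => sum_le_sum_of_subset_of_nonneg
    (monotone_filter_right _ fun _ _ hj => hj.trans_le hab) fun i _ _ => hs i

end PrefixSum

namespace Policy

variable {l r : ℝ} {n : ℕ}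

theorem s_pos (π : Policy l r n) (hl : 0 < l) (i : Fin n) : 0 < π.s i :=
  hl.trans_le (π.s_lb i)

def sideBySide (s : Fin n → ℝ) (hl : 0 ≤ l) (hs : ∀ i, l ≤ s i ∧ s i ≤ r)
    (hsum : ∑ i, s i ≤ 1) : Policy l r n where
  tau i := prefixSum s i
  s := s
  tau_nonneg i := prefixSum_zero s ▸ prefixSum_mono (fun j => hl.trans (hs j).1) i.val.zero_le
  fits i := by
    rw [← prefixSum_succ]
    exact (prefixSum_mono (fun j => hl.trans (hs j).1) i.isLt).trans (prefixSum_self s ▸ hsum)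
  s_lb i := (hs i).1
  s_ub i := (hs i).2

end Policy

section Power

variable {l r : ℝ} {n : ℕ}

theorem power_sideBySide (A s : Fin n → ℝ) (hl : 0 ≤ l) (hs : ∀ i, l ≤ s i ∧ s i ≤ r)
    (hsum : ∑ i, s i ≤ 1) {c : ℝ} (hc : ∀ i, A i / s i = c) (t : ℝ) :
    power A (Policy.sideBySide s hl hs hsum) t = (Ico 0 (∑ i, s i)).indicator (fun _ => c) t := by
  have hmono : Monotone (prefixSum s) := prefixSum_mono fun j => hl.trans (hs j).1
  simp only [power, Policy.sideBySide, hc, ← prefixSum_succ]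
  rw [Fin.sum_univ_eq_sum_range (fun k => (Ico (prefixSum s k) (prefixSum s (k + 1))).indicator
    (fun _ => c) t), hmono.sum_range_indicator_Ico_succ, prefixSum_zero, prefixSum_self]

theorem power_le_sum_abs (A : Fin n → ℝ) (π : Policy l r n) (t : ℝ) :
    power A π t ≤ ∑ i, |A i / π.s i| :=
  sum_le_sum fun _ _ => indicator_apply_le' (fun _ => le_abs_self _) fun _ => abs_nonneg _

theorem bddAbove_power_image (A : Fin n → ℝ) (π : Policy l r n) (S : Set ℝ) :
    BddAbove (power A π '' S) :=
  ⟨_, forall_mem_image.2 fun t _ => power_le_sum_abs A π t⟩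

theorem power_le_peak (A : Fin n → ℝ) (π : Policy l r n) {t : ℝ} (ht : t ∈ Ico (0 : ℝ) 1) :
    power A π t ≤ peak A π :=
  le_csSup (bddAbove_power_image A π _) (mem_image_of_mem _ ht)

theorem peak_eq_of_forall_power_eq {A : Fin n → ℝ} {π : Policy l r n} {c : ℝ}
    (h : ∀ t ∈ Ico (0 : ℝ) 1, power A π t = c) : peak A π = c := by
  rw [peak, image_congr h, (Set.nonempty_Ico.2 zero_lt_one).image_const, csSup_singleton]

theorem integrableOn_power (A : Fin n → ℝ) (π : Policy l r n) :
    IntegrableOn (power A π) (Ico 0 1) := by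
  unfold power
  refine integrable_finsetSum _ fun _ _ => ?_
  exact (integrableOn_const measure_Ico_lt_top.ne).indicator measurableSet_Ico

theorem integral_power (A : Fin n → ℝ) (π : Policy l r n) (hl : 0 < l) :
    ∫ t in Ico 0 1, power A π t = ∑ i, A i := by
  unfold power
  rw [integral_finsetSum]
  swap
  · exact fun _ _ => (integrableOn_const measure_Ico_lt_top.ne).indicator measurableSet_Ico
  refine sum_congr rfl fun i _ => ?_
  have hsub : Ico (π.tau i) (π.tau i + π.s i) ⊆ Ico 0 1 := fun _ hx =>
    ⟨(π.tau_nonneg i).trans hx.1, hx.2.trans_le (π.fits i)⟩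
  rw [integral_indicator_const _ measurableSet_Ico, measureReal_restrict_apply measurableSet_Ico,
    inter_eq_self_of_subset_left hsub, Real.volume_real_Ico_of_le (by linarith [π.s_pos hl i]),
    add_sub_cancel_left, smul_eq_mul, mul_div_cancel₀ _ (π.s_pos hl i).ne']

theorem sum_le_peak (A : Fin n → ℝ) (π : Policy l r n) (hl : 0 < l) : ∑ i, A i ≤ peak A π := by
  calc ∑ i, A i = ∫ t in Ico 0 1, power A π t := (integral_power A π hl).symm
    _ ≤ ∫ _ in Ico (0 : ℝ) 1, peak A π :=
      setIntegral_mono_on (integrableOn_power A π) (integrableOn_const measure_Ico_lt_top.ne)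
        measurableSet_Ico fun _ => power_le_peak A π
    _ = peak A π := by simp

theorem isLeast_peak {A : Fin n → ℝ} {π : Policy l r n} (hl : 0 < l) (h : peak A π = ∑ i, A i) :
    IsLeast {p | ∃ π : Policy l r n, p = peak A π} (peak A π) :=
  ⟨⟨π, rfl⟩, by rintro _ ⟨π', rfl⟩; exact h ▸ sum_le_peak A π' hl⟩

end Power


theorem ideal_case_side_by_side_general (l r : ℝ) (n : ℕ) (A : Fin n → ℝ)
    (hl : 0 < l) (hfit : ∀ i, l ≤ A i / (∑ j, A j) ∧ A i / (∑ j, A j) ≤ r) :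
    ∃ π : Policy l r n,
      (∀ i, π.s i = A i / (∑ j, A j) ∧
        π.tau i = ∑ j ∈ Finset.univ.filter (fun j => j < i), A j / (∑ k, A k)) ∧
      (∀ i, A i / π.s i = ∑ j, A j) ∧
      (∀ t ∈ Set.Ico (0 : ℝ) 1, power A π t = ∑ j, A j) ∧
      peak A π = ∑ j, A j ∧
      peak A π = Popt l r n A := by
  set S := ∑ j, A j
  have hsum : ∑ i, A i / S = S / S := (sum_div ..).symm
  have hA : ∀ i, A i ≠ 0 := fun i => (div_ne_zero_iff.1 (hl.trans_le (hfit i).1).ne').1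
  have hrate : ∀ i, A i / (A i / S) = S := fun i => div_div_cancel₀ (hA i)
  let π := Policy.sideBySide (fun i => A i / S) hl.le hfit (hsum ▸ div_self_le_one S)
  have hpower : ∀ t ∈ Ico (0 : ℝ) 1, power A π t = S := by
    intro t ht
    rw [power_sideBySide _ _ _ _ _ hrate, hsum]
    rcases eq_or_ne S 0 with hS | hS
    · simp [hS]
    · rw [div_self hS, indicator_of_mem ht]
  have hpeak : peak A π = S := peak_eq_of_forall_power_eq hpower
  exact ⟨π, fun i => ⟨rfl, rfl⟩, hrate, hpower, hpeak, ((isLeast_peak hl hpeak).csInf_eq).symm⟩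

theorem ideal_case_side_by_side (l r : ℝ) (n : ℕ) (A : Fin n → ℝ)
    (hl : 0 < l) (hlr : l ≤ r) (hr : r ≤ 1) (hn : 1 ≤ n) (hA : ∀ i, 0 < A i)
    (hfit : ∀ i, l ≤ A i / (∑ j, A j) ∧ A i / (∑ j, A j) ≤ r) :
    ∃ π : Policy l r n,
      (∀ i, π.s i = A i / (∑ j, A j) ∧
        π.tau i = ∑ j ∈ Finset.univ.filter (fun j => j < i), A j / (∑ k, A k)) ∧
      (∀ i, A i / π.s i = ∑ j, A j) ∧
      (∀ t ∈ Set.Ico (0 : ℝ) 1, power A π t = ∑ j, A j) ∧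
      peak A π = ∑ j, A j ∧
      peak A π = Popt l r n A :=
  ideal_case_side_by_side_general l r n A hl hfit
end

section
/- Suppose 0 < ℓ ≤ r ≤ 1 and ⌈1/r⌉ ≤ 1/ℓ (the pair (ℓ, r) lies in the good region). Then there exists a scheduling policy π with P_max^π ≤ A + A_max/ℓ, where A = Σ_{i=1}^n A_i and A_max = max_i A_i. -/
open Finset Set

theorem near_ideal_case_upper_bound (l r : ℝ) (n : ℕ) (A : Fin n → ℝ)
    (hl : 0 < l) (hlr : l ≤ r) (hr : r ≤ 1) (hn : 1 ≤ n) (hA : ∀ i, 0 < A i)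
    (hgood : (⌈(1 : ℝ) / r⌉ : ℝ) ≤ 1 / l) :
    ∃ π : Policy l r n, peak A π ≤ (∑ i, A i) + (⨆ i, A i) / l := by
  have hr0 : 0 < r := lt_of_lt_of_le hl hlr
  have hrinv : (0:ℝ) ≤ 1 / r := by positivity
  set k : ℕ := ⌈(1:ℝ)/r⌉₊ with hk_def
  have hk_pos : 0 < k := Nat.ceil_pos.mpr (by positivity)
  have hkR : (0:ℝ) < (k:ℝ) := by exact_mod_cast hk_pos
  have hle_ceil : 1/r ≤ (k:ℝ) := Nat.le_ceil _
  have hkl : (k:ℝ) ≤ 1 / l := by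
    calc (k:ℝ) = (⌈(1:ℝ)/r⌉ : ℝ) := natCast_ceil_eq_intCast_ceil hrinv
    _ ≤ 1/l := hgood
  set s : ℝ := 1/(k:ℝ) with hs_def
  have hs_pos : 0 < s := by positivity
  have hsk : s * (k:ℝ) = 1 := by rw [hs_def]; field_simp
  have hcancel : ∀ a : ℝ, a * s * (k:ℝ) = a := by
    intro a; rw [mul_assoc, hsk, mul_one]
  have hcancel2 : ∀ a : ℝ, a * (k:ℝ) * s = a := by
    intro a; rw [mul_assoc, mul_comm (k:ℝ) s, hsk, mul_one]
  have hs_lb : l ≤ s := by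
    rw [hs_def, le_div_iff₀ hkR]
    calc l * k ≤ l * (1/l) := by nlinarith
    _ = 1 := by field_simp
  have hs_ub : s ≤ r := by
    rw [hs_def, div_le_iff₀ hkR]
    calc (1:ℝ) = r * (1/r) := by field_simp
    _ ≤ r * k := by nlinarith
  haveI : Nonempty (Fin n) := ⟨⟨0, hn⟩⟩
  set Amax : ℝ := ⨆ i, A i with hAmax_def
  have hAle : ∀ i, A i ≤ Amax := fun i => le_ciSup (Set.finite_range A).bddAbove i
  have hAmax_pos : 0 < Amax := lt_of_lt_of_le (hA (Classical.arbitrary _)) (hAle _)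
  set A' : ℕ → ℝ := fun j => if h : j < n then A ⟨j, h⟩ else 0 with hA'_def
  have hA'_nonneg : ∀ j, 0 ≤ A' j := by
    intro j; simp only [hA'_def]; split
    · exact (hA _).le
    · exact le_rfl
  have hA'_le : ∀ j, A' j ≤ Amax := by
    intro j; simp only [hA'_def]; split
    · exact hAle _
    · exact hAmax_pos.le
  set c : ℕ → ℝ := fun j => ∑ x ∈ Finset.range j, A' x with hc_def
  have hc_nonneg : ∀ j, 0 ≤ c j := fun j => Finset.sum_nonneg fun x _ => hA'_nonneg x
  set Atot : ℝ := ∑ i, A i with hAtot_def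
  have hAtot_eq : c n = Atot := by
    simp only [hc_def, hAtot_def]
    rw [← Fin.sum_univ_eq_sum_range]
    apply Finset.sum_congr rfl
    intro i _
    simp [hA'_def, i.isLt]
  have hAtot_pos : 0 < Atot := Finset.sum_pos (fun i _ => hA i) Finset.univ_nonempty
  have hc_lt : ∀ j < n, c j < Atot := by
    intro j hj
    have h1 : c (j+1) ≤ c n := by
      apply Finset.sum_le_sum_of_subset_of_nonneg
      · exact Finset.range_subset_range.mpr hj
      · intro x _ _; exact hA'_nonneg x
    have h1' : c j + A' j ≤ c n := by
      simpa [hc_def, Finset.sum_range_succ] using h1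
    have h2 : 0 < A' j := by
      simp only [hA'_def, hj, dif_pos]; exact hA _
    rw [← hAtot_eq]; linarith
  have hc_succ : ∀ j, c (j+1) = c j + A' j := by
    intro j; simp only [hc_def]; exact Finset.sum_range_succ A' j
  have hc_sub : ∀ p q : ℕ, p ≤ q + 1 → ∑ j ∈ Finset.Ico p (q+1), A' j = c (q+1) - c p := by
    intro p q h; simp only [hc_def]; exact Finset.sum_Ico_eq_sub A' h
  have hA'_eq : ∀ i : Fin n, A' (i:ℕ) = A i := by
    intro i; simp [hA'_def, i.isLt]
  set mi : ℕ → ℕ := fun j => ⌊(k:ℝ) * c j / Atot⌋₊ with hmi_def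
  have hmi_nonneg : ∀ j, (0:ℝ) ≤ (k:ℝ) * c j / Atot := by
    intro j
    have := hc_nonneg j
    positivity
  have hmi_lb : ∀ j, (mi j : ℝ) * Atot ≤ (k:ℝ) * c j := by
    intro j
    have h := Nat.floor_le (hmi_nonneg j)
    rw [le_div_iff₀ hAtot_pos] at h
    exact h
  have hmi_ub : ∀ j, (k:ℝ) * c j < ((mi j : ℝ) + 1) * Atot := by
    intro j
    have h := Nat.lt_floor_add_one ((k:ℝ) * c j / Atot)
    rw [div_lt_iff₀ hAtot_pos] at h
    exact h
  have hmi_lt : ∀ j < n, mi j < k := by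
    intro j hj
    rw [hmi_def]
    rw [Nat.floor_lt (hmi_nonneg j)]
    rw [div_lt_iff₀ hAtot_pos]
    have := hc_lt j hj
    nlinarith
  have htau0 : ∀ i : Fin n, (0:ℝ) ≤ (mi (i:ℕ) : ℝ) * s := by
    intro i; positivity
  have hfits : ∀ i : Fin n, (mi (i:ℕ) : ℝ) * s + s ≤ 1 := by
    intro i
    have h1 : (mi (i:ℕ) : ℝ) + 1 ≤ (k:ℝ) := by exact_mod_cast hmi_lt i i.isLt
    have h2 : ((mi (i:ℕ) : ℝ) + 1) * s ≤ (k:ℝ) * s := by nlinarith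
    calc (mi (i:ℕ):ℝ) * s + s = ((mi (i:ℕ):ℝ) + 1) * s := by ring
    _ ≤ (k:ℝ) * s := h2
    _ = 1 := by rw [mul_comm]; exact hsk
  clear hmi_def hc_def hA'_def hAmax_def hAtot_def
  clear_value mi c A' Atot Amax
  set π : Policy l r n :=
    ⟨fun i => (mi (i:ℕ)) * s, fun _ => s, htau0, hfits, fun _ => hs_lb, fun _ => hs_ub⟩
    with hπ_def
  have hπtau : ∀ i : Fin n, π.tau i = (mi (i:ℕ)) * s := fun i => rfl
  have hπs : ∀ i : Fin n, π.s i = s := fun i => rfl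
  refine ⟨π, ?_⟩
  apply Real.sSup_le
  · rintro x ⟨t, ⟨ht0, ht1⟩, rfl⟩
    set m : ℕ := ⌊t * k⌋₊ with hm_def
    have hterm : ∀ i : Fin n,
        Set.indicator (Set.Ico (π.tau i) (π.tau i + π.s i)) (fun _ => A i / π.s i) t
        = if m = mi (i:ℕ) then A i / s else 0 := by
      intro i
      rw [hπtau, hπs, Set.indicator_apply]
      congr 1
      simp only [Set.mem_Ico, eq_iff_iff]
      constructor
      · rintro ⟨h1, h2⟩
        rw [hm_def, Nat.floor_eq_iff (by positivity)]
        constructor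
        · calc (mi (i:ℕ):ℝ) = (mi (i:ℕ):ℝ) * s * k := (hcancel _).symm
          _ ≤ t * k := mul_le_mul_of_nonneg_right h1 hkR.le
        · calc t * k < ((mi (i:ℕ):ℝ) * s + s) * k := mul_lt_mul_of_pos_right h2 hkR
          _ = (mi (i:ℕ):ℝ) * s * k + s * k := by ring
          _ = (mi (i:ℕ):ℝ) + 1 := by rw [hcancel, hsk]
      · intro h
        have h1 : (mi (i:ℕ):ℝ) ≤ t * k := by
          rw [← h]; exact Nat.floor_le (by positivity)
        have h2 : t * k < (mi (i:ℕ):ℝ) + 1 := by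
          rw [← h]; exact Nat.lt_floor_add_one _
        have ht' : t * (k:ℝ) * s = t := hcancel2 t
        constructor
        · calc (mi (i:ℕ):ℝ) * s ≤ t * k * s := mul_le_mul_of_nonneg_right h1 hs_pos.le
          _ = t := ht'
        · calc t = t * k * s := ht'.symm
          _ < ((mi (i:ℕ):ℝ) + 1) * s := mul_lt_mul_of_pos_right h2 hs_pos
          _ = (mi (i:ℕ):ℝ) * s + s := by ring
    have hpow : power A π t
        = (∑ j ∈ (Finset.range n).filter (fun j => m = mi j), A' j) / s := by
      rw [power]
      rw [Finset.sum_congr rfl (fun i _ => hterm i)]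
      have hdiv : ∀ i : Fin n, (if m = mi (i:ℕ) then A i / s else 0)
          = (if m = mi (i:ℕ) then A i else 0) / s := by
        intro i; split <;> simp
      rw [Finset.sum_congr rfl (fun i _ => hdiv i), ← Finset.sum_div]
      congr 1
      rw [Finset.sum_filter,
        ← Fin.sum_univ_eq_sum_range (fun j => if m = mi j then A' j else 0)]
      apply Finset.sum_congr rfl
      intro i _
      split
      · exact (hA'_eq i).symm
      · rfl
    rw [hpow]
    set S : Finset ℕ := (Finset.range n).filter (fun j => m = mi j) with hS_def
    have hsum : ∑ j ∈ S, A' j ≤ Atot / k + Amax := by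
      rcases S.eq_empty_or_nonempty with hSe | hSne
      · rw [hSe, Finset.sum_empty]
        positivity
      · set p : ℕ := S.min' hSne with hp_def
        set q : ℕ := S.max' hSne with hq_def
        have hpS : p ∈ S := S.min'_mem hSne
        have hqS : q ∈ S := S.max'_mem hSne
        have hpq : p ≤ q := S.min'_le q hqS
        have hmp : m = mi p := (Finset.mem_filter.mp hpS).2
        have hmq : m = mi q := (Finset.mem_filter.mp hqS).2
        have hsub : S ⊆ Finset.Ico p (q+1) := by
          intro j hj
          rw [Finset.mem_Ico]
          exact ⟨S.min'_le j hj, Nat.lt_succ_of_le (S.le_max' j hj)⟩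
        have h1 : ∑ j ∈ S, A' j ≤ ∑ j ∈ Finset.Ico p (q+1), A' j :=
          Finset.sum_le_sum_of_subset_of_nonneg hsub (fun j _ _ => hA'_nonneg j)
        have h2 : ∑ j ∈ Finset.Ico p (q+1), A' j = c (q+1) - c p :=
          hc_sub p q (Nat.le_succ_of_le hpq)
        have h3 : c (q+1) = c q + A' q := hc_succ q
        have h4 : c q - c p ≤ Atot / k := by
          rw [le_div_iff₀ hkR]
          have hlbp := hmi_lb p
          have hubq := hmi_ub q
          rw [← hmp] at hlbp
          rw [← hmq] at hubq
          nlinarith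
        have h5 : A' q ≤ Amax := hA'_le q
        calc ∑ j ∈ S, A' j ≤ c (q+1) - c p := by rw [← h2]; exact h1
        _ = (c q - c p) + A' q := by rw [h3]; ring
        _ ≤ Atot / k + Amax := by linarith
    have hfin : (Atot / k + Amax) / s = Atot + Amax * k := by
      rw [hs_def]
      field_simp
    calc (∑ j ∈ S, A' j) / s ≤ (Atot / k + Amax) / s := by gcongr
    _ = Atot + Amax * k := hfin
    _ ≤ Atot + Amax / l := by
          have h6 : Amax * k ≤ Amax * (1/l) := by nlinarith
          have h7 : Amax * (1/l) = Amax / l := by ring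
          linarith
  · have h0 : (0:ℝ) ≤ Atot := hAtot_pos.le
    have h1 : (0:ℝ) ≤ Amax / l := by positivity
    linarith
end

section
/- Suppose 0 < ℓ ≤ r < 1 and ⌈1/r⌉ > 1/ℓ (the pair (ℓ, r) is not in the good region), and set Z* = r·⌊1/r⌋. Then there exists a scheduling policy π with P_max^π ≤ A/Z* + A_max/r; in particular P_max^π ≤ A/Z* + A_max/ℓ, where A = Σ_{i=1}^n A_i and A_max = max_i A_i. -/
/-!
Cut `[0, 1)` into `m = ⌊1/r⌋` consecutive slots of length `r` and run every demand over a whole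
slot. Demands are assigned in order by prefix sum: with `c = A / m`, demand `i` goes into slot
`⌊(A_1 + ⋯ + A_{i-1}) / c⌋ < m`. The demands of one slot are consecutive and their prefix sums
lie in a window of length `c`, so the slot carries at most `c + A_max`, and the power never
exceeds `(A / m + A_max) / r`.
-/

open Finset Set

theorem Nat.floor_div_eq_iff_mem_Ico {x c : ℝ} (hx : 0 ≤ x) (hc : 0 < c) (j : ℕ) :
    ⌊x / c⌋₊ = j ↔ x ∈ Set.Ico (j * c) (j * c + c) := by
  rw [Nat.floor_eq_iff (by positivity), le_div_iff₀ hc, div_lt_iff₀ hc, add_mul, one_mul,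
    Set.mem_Ico]

theorem Finset.sum_filter_sum_Iio_mem_Ico_le {ι : Type*} [LinearOrder ι] [LocallyFiniteOrderBot ι]
    (s : Finset ι) {a : ι → ℝ} {x y M : ℝ} (ha : ∀ i, 0 ≤ a i) (haM : ∀ i ∈ s, a i ≤ M)
    (hM : 0 ≤ M) (hxy : x ≤ y) :
    ∑ i ∈ s with ∑ j ∈ Iio i, a j ∈ Set.Ico x y, a i ≤ y - x + M := by
  set T := s.filter fun i => ∑ j ∈ Iio i, a j ∈ Set.Ico x y
  rcases T.eq_empty_or_nonempty with hT | hT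
  · rw [hT, sum_empty]; linarith
  have hfirst := (mem_filter.mp (T.min'_mem hT)).2
  obtain ⟨hlast_s, hlast⟩ := mem_filter.mp (T.max'_mem hT)
  have hsub : T ⊆ Iic (T.max' hT) \ Iio (T.min' hT) := fun i hi =>
    mem_sdiff.mpr ⟨mem_Iic.mpr (T.le_max' i hi), fun h => (mem_Iio.mp h).not_ge (T.min'_le i hi)⟩
  calc ∑ i ∈ T, a i
      ≤ ∑ i ∈ Iic (T.max' hT) \ Iio (T.min' hT), a i :=
        sum_le_sum_of_subset_of_nonneg hsub fun i _ _ => ha i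
    _ = ∑ j ∈ Iio (T.max' hT), a j + a (T.max' hT) - ∑ j ∈ Iio (T.min' hT), a j := by
        rw [sum_sdiff_eq_sub (Iio_subset_Iic_self.trans (Iic_subset_Iic.mpr (T.min'_le_max' hT))),
          sum_Iio_add_eq_sum_Iic]
    _ ≤ y - x + M := by linarith [hfirst.1, hlast.2, haM _ hlast_s]

section Slots

variable {l r : ℝ} {n : ℕ}

def Policy.ofSlots (slot : Fin n → ℕ) (hlr : l ≤ r) (hr : 0 ≤ r)
    (hfit : ∀ i, ((slot i : ℝ) + 1) * r ≤ 1) : Policy l r n where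
  tau i := slot i * r
  s _ := r
  tau_nonneg _ := by positivity
  fits i := by linarith [hfit i]
  s_lb _ := hlr
  s_ub _ := le_rfl

variable (A : Fin n → ℝ) (slot : Fin n → ℕ) (hlr : l ≤ r) (hr : 0 < r)
  (hfit : ∀ i, ((slot i : ℝ) + 1) * r ≤ 1)

theorem power_ofSlots {t : ℝ} (ht : 0 ≤ t) :
    power A (Policy.ofSlots slot hlr hr.le hfit) t = (∑ i with slot i = ⌊t / r⌋₊, A i) / r := by
  rw [power, sum_div, sum_filter]
  refine sum_congr rfl fun i _ => ?_
  simp only [Policy.ofSlots, indicator_apply, eq_comm (a := slot i),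
    Nat.floor_div_eq_iff_mem_Ico ht hr]

theorem peak_le_of_forall_power_le {π : Policy l r n} {B : ℝ}
    (h : ∀ t ∈ Set.Ico (0 : ℝ) 1, power A π t ≤ B) : peak A π ≤ B :=
  csSup_le ((Set.nonempty_Ico.mpr one_pos).image _) (Set.forall_mem_image.mpr h)

theorem peak_ofSlots_le {L : ℝ} (hL : ∀ j, ∑ i with slot i = j, A i ≤ L) :
    peak A (Policy.ofSlots slot hlr hr.le hfit) ≤ L / r :=
  peak_le_of_forall_power_le A fun t ht => by
    rw [power_ofSlots A slot hlr hr hfit ht.1]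
    exact div_le_div_of_nonneg_right (hL _) hr.le

end Slots

section PrefixSumSlots

variable {n : ℕ} (A : Fin n → ℝ)

noncomputable def prefixSumSlot (c : ℝ) (i : Fin n) : ℕ := ⌊(∑ j ∈ Iio i, A j) / c⌋₊

theorem sum_filter_prefixSumSlot_eq_le (hA : ∀ i, 0 ≤ A i) {c : ℝ} (hc : 0 < c) (k : ℕ) :
    ∑ i with prefixSumSlot A c i = k, A i ≤ c + ⨆ i, A i := by
  have hmem : ∀ i, prefixSumSlot A c i = k ↔ ∑ j ∈ Iio i, A j ∈ Set.Ico (k * c) (k * c + c) :=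
    fun i => Nat.floor_div_eq_iff_mem_Ico (sum_nonneg fun j _ => hA j) hc k
  rw [filter_congr fun i _ => hmem i]
  convert univ.sum_filter_sum_Iio_mem_Ico_le hA
    (fun i _ => le_ciSup (Set.finite_range A).bddAbove i) (Real.iSup_nonneg hA)
    (le_add_of_nonneg_right hc.le) using 1
  ring

theorem prefixSumSlot_lt (hA : ∀ i, 0 < A i) {m : ℕ} (hm : 0 < m) (i : Fin n) :
    prefixSumSlot A ((∑ j, A j) / m) i < m := by
  have htot : 0 < ∑ j, A j := sum_pos (fun j _ => hA j) ⟨i, mem_univ i⟩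
  have hprefix : ∑ j ∈ Iio i, A j < ∑ j, A j := calc
    ∑ j ∈ Iio i, A j < ∑ j ∈ Iio i, A j + A i := lt_add_of_pos_right _ (hA i)
    _ = ∑ j ∈ Iic i, A j := sum_Iio_add_eq_sum_Iic i
    _ ≤ ∑ j, A j := sum_le_univ_sum_of_nonneg fun j => (hA j).le
  rw [prefixSumSlot, Nat.floor_lt (div_nonneg (sum_nonneg fun j _ => (hA j).le) (by positivity)),
    div_lt_iff₀ (by positivity), mul_div_cancel₀ _ (by positivity)]
  exact hprefix

end PrefixSumSlots

theorem exists_policy_peak_le {l r : ℝ} {n : ℕ} (A : Fin n → ℝ) (hA : ∀ i, 0 < A i) (hn : 0 < n)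
    (hlr : l ≤ r) (hr : 0 < r) {m : ℕ} (hm : 0 < m) (hmr : m * r ≤ 1) :
    ∃ π : Policy l r n, peak A π ≤ (∑ i, A i) / (r * m) + (⨆ i, A i) / r := by
  set c := (∑ i, A i) / m
  have hc : 0 < c := div_pos (sum_pos (fun i _ => hA i) ⟨⟨0, hn⟩, mem_univ _⟩) (by positivity)
  have hfit (i : Fin n) : ((prefixSumSlot A c i : ℝ) + 1) * r ≤ 1 := by
    have : (prefixSumSlot A c i : ℝ) + 1 ≤ m := by exact_mod_cast prefixSumSlot_lt A hA hm i
    nlinarith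
  refine ⟨Policy.ofSlots (prefixSumSlot A c) hlr hr.le hfit, ?_⟩
  convert peak_ofSlots_le A _ hlr hr hfit (sum_filter_prefixSumSlot_eq_le A (fun i => (hA i).le) hc)
    using 1
  rw [add_div, div_div, mul_comm]

theorem non_ideal_case_upper_bound_general (l r : ℝ) (n : ℕ) (A : Fin n → ℝ)
    (hl : 0 < l) (hlr : l ≤ r) (hr : r < 1) (hn : 1 ≤ n) (hA : ∀ i, 0 < A i) :
    ∃ π : Policy l r n,
      peak A π ≤ (∑ i, A i) / (r * (⌊(1 : ℝ) / r⌋ : ℝ)) + (⨆ i, A i) / r ∧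
      peak A π ≤ (∑ i, A i) / (r * (⌊(1 : ℝ) / r⌋ : ℝ)) + (⨆ i, A i) / l := by
  have hr0 : 0 < r := hl.trans_le hlr
  have hm : 0 < ⌊1 / r⌋₊ := Nat.floor_pos.mpr ((one_le_div hr0).mpr hr.le)
  have hmr : (⌊1 / r⌋₊ : ℝ) * r ≤ 1 := (le_div_iff₀ hr0).mp (Nat.floor_le (by positivity))
  obtain ⟨π, hπ⟩ := exists_policy_peak_le A hA hn hlr hr0 hm hmr
  rw [natCast_floor_eq_intCast_floor (by positivity)] at hπ
  refine ⟨π, hπ, hπ.trans ?_⟩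
  have hAmax : 0 ≤ ⨆ i, A i := Real.iSup_nonneg fun i => (hA i).le
  gcongr

theorem non_ideal_case_upper_bound (l r : ℝ) (n : ℕ) (A : Fin n → ℝ)
    (hl : 0 < l) (hlr : l ≤ r) (hr : r < 1) (hn : 1 ≤ n) (hA : ∀ i, 0 < A i)
    (hbad : (⌈(1 : ℝ) / r⌉ : ℝ) > 1 / l) :
    ∃ π : Policy l r n,
      peak A π ≤ (∑ i, A i) / (r * (⌊(1 : ℝ) / r⌋ : ℝ)) + (⨆ i, A i) / r ∧
      peak A π ≤ (∑ i, A i) / (r * (⌊(1 : ℝ) / r⌋ : ℝ)) + (⨆ i, A i) / l :=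
  non_ideal_case_upper_bound_general l r n A hl hlr hr hn hA
end

section
/- Suppose 0 < ℓ ≤ r < 1 and ⌈1/r⌉ > 1/ℓ. Let q be a positive integer and s_1, …, s_q reals with ℓ ≤ s_i ≤ r for every i, such that s_1 + ⋯ + s_q ≤ 1 and 1 − (s_1 + ⋯ + s_q) < ℓ (the row is filled: no further width-[ℓ,r] rectangle fits). Then q = ⌊1/r⌋ (= ⌊1/ℓ⌋). In words, when 1 is not achievable, every filled row contains exactly K_0 = ⌊1/r⌋ rectangles. -/
theorem filled_row_has_K0_rectangles (l r : ℝ) (hl : 0 < l) (hlr : l ≤ r) (hr : r < 1)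
    (hbad : (⌈(1 : ℝ) / r⌉ : ℝ) > 1 / l)
    (q : ℕ) (hq : 0 < q) (s : Fin q → ℝ) (hs : ∀ i, l ≤ s i ∧ s i ≤ r)
    (hsum : ∑ i, s i ≤ 1) (hfilled : 1 - ∑ i, s i < l) :
    (q : ℤ) = ⌊(1 : ℝ) / r⌋ ∧ ⌊(1 : ℝ) / r⌋ = ⌊(1 : ℝ) / l⌋ := by
  have hrpos : 0 < r := lt_of_lt_of_le hl hlr
  -- floor equality
  have hinv : (1 : ℝ) / r ≤ 1 / l := one_div_le_one_div_of_le hl hlr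
  have hfl : ⌊(1 : ℝ) / r⌋ ≤ ⌊(1 : ℝ) / l⌋ := Int.floor_le_floor hinv
  have hceil : (⌈(1 : ℝ) / r⌉ : ℤ) ≤ ⌊(1 : ℝ) / r⌋ + 1 := Int.ceil_le_floor_add_one _
  have hceil' : ((⌈(1 : ℝ) / r⌉ : ℤ) : ℝ) ≤ (⌊(1 : ℝ) / r⌋ : ℝ) + 1 := by
    exact_mod_cast hceil
  have hlt : (1 : ℝ) / l < (⌊(1 : ℝ) / r⌋ : ℝ) + 1 := lt_of_lt_of_le hbad hceil'
  have hfl2 : ⌊(1 : ℝ) / l⌋ ≤ ⌊(1 : ℝ) / r⌋ := by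
    have := Int.floor_le ((1 : ℝ) / l)
    have h2 : ((⌊(1 : ℝ) / l⌋ : ℤ) : ℝ) < (⌊(1 : ℝ) / r⌋ : ℝ) + 1 := lt_of_le_of_lt this hlt
    have h3 : (⌊(1 : ℝ) / l⌋ : ℤ) < ⌊(1 : ℝ) / r⌋ + 1 := by exact_mod_cast h2
    omega
  have hfleq : ⌊(1 : ℝ) / r⌋ = ⌊(1 : ℝ) / l⌋ := le_antisymm hfl hfl2
  -- bounds on the sum
  have hlow : (q : ℝ) * l ≤ ∑ i, s i := by
    calc (q : ℝ) * l = ∑ _i : Fin q, l := by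
          simp [Finset.sum_const, mul_comm]
      _ ≤ ∑ i, s i := Finset.sum_le_sum fun i _ => (hs i).1
  have hhigh : ∑ i, s i ≤ (q : ℝ) * r := by
    calc ∑ i, s i ≤ ∑ _i : Fin q, r := Finset.sum_le_sum fun i _ => (hs i).2
      _ = (q : ℝ) * r := by simp [Finset.sum_const, mul_comm]
  -- q ≤ ⌊1/l⌋
  have hq1 : (q : ℝ) ≤ 1 / l := by
    rw [le_div_iff₀ hl]
    exact le_trans hlow hsum
  have hqle : (q : ℤ) ≤ ⌊(1 : ℝ) / l⌋ := Int.le_floor.mpr (by exact_mod_cast hq1)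
  -- q ≥ ⌊1/r⌋
  have hqge : ⌊(1 : ℝ) / r⌋ ≤ (q : ℤ) := by
    by_contra hcon
    push_neg at hcon
    -- q + 1 ≤ ⌊1/r⌋, so (q+1 : ℝ) ≤ 1/r
    have h1 : (q : ℤ) + 1 ≤ ⌊(1 : ℝ) / r⌋ := by omega
    have h2 : ((q : ℝ) + 1) ≤ 1 / r := by
      have := Int.floor_le ((1 : ℝ) / r)
      have h3 : (((q : ℤ) + 1 : ℤ) : ℝ) ≤ (⌊(1 : ℝ) / r⌋ : ℝ) := by exact_mod_cast h1
      push_cast at h3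
      linarith
    have h4 : ((q : ℝ) + 1) * r ≤ 1 := by
      rw [← le_div_iff₀ hrpos]; exact h2
    -- 1 < sum + l ≤ q*r + l ≤ (q+1)*r ≤ 1, contradiction
    have h5 : (1 : ℝ) < ∑ i, s i + l := by linarith
    have h6 : ∑ i, s i + l ≤ (q : ℝ) * r + r := by linarith
    nlinarith
  exact ⟨le_antisymm (hfleq ▸ hqle) hqge, hfleq⟩
end

section
/- Suppose 0 < ℓ ≤ r < 1 and ⌈1/r⌉ > 1/ℓ, and set K_0 = ⌊1/r⌋. Let τ_1, …, τ_{K_0} and s_1, …, s_{K_0} be reals with ℓ ≤ s_i ≤ r for every i, 0 ≤ τ_1, τ_i + s_i ≤ τ_{i+1} for 1 ≤ i ≤ K_0 − 1, and τ_{K_0} + s_{K_0} ≤ 1 (K_0 rectangles placed in order without overlap within [0,1]). Then for every i ∈ {1, …, K_0}: τ_i ≤ 1 − (K_0 − i + 1)·ℓ and τ_i + s_i ≥ i·ℓ. Consequently the i-th rectangle's interval [τ_i, τ_i + s_i] contains the fixed interval [1 − (K_0 − i + 1)·ℓ, i·ℓ], which is nondegenerate of length (K_0 + 1)·ℓ −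 1 > 0. In particular each of these K_0 identical, identically placed intervals is gap-free in every such row. -/
theorem gap_free_intervals (l r : ℝ) (hl : 0 < l) (hlr : l ≤ r) (hr : r < 1)
    (hbad : (⌈(1 : ℝ) / r⌉ : ℝ) > 1 / l)
    (K0 : ℕ) (hK0 : (K0 : ℤ) = ⌊(1 : ℝ) / r⌋)
    (tau s : ℕ → ℝ)
    (hs : ∀ i < K0, l ≤ s i ∧ s i ≤ r)
    (htau0 : 0 ≤ tau 0)
    (horder : ∀ i, i + 1 < K0 → tau i + s i ≤ tau (i + 1))
    (hend : tau (K0 - 1) + s (K0 - 1) ≤ 1) :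
    (∀ i < K0,
        tau i ≤ 1 - ((K0 : ℝ) - (i : ℝ)) * l ∧
        ((i : ℝ) + 1) * l ≤ tau i + s i ∧
        Set.Icc (1 - ((K0 : ℝ) - (i : ℝ)) * l) (((i : ℝ) + 1) * l) ⊆
          Set.Icc (tau i) (tau i + s i)) ∧
    ((K0 : ℝ) + 1) * l - 1 > 0 := by
  have hr0 : 0 < r := lt_of_lt_of_le hl hlr
  -- lower bounds by induction
  have hlb : ∀ i, i < K0 → ((i : ℝ) + 1) * l ≤ tau i + s i := by
    intro i
    induction i with
    | zero =>
      intro h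
      have := (hs 0 h).1
      push_cast
      linarith
    | succ n ih =>
      intro h
      have hn : n < K0 := Nat.lt_of_succ_lt h
      have h1 := ih hn
      have h2 := horder n h
      have h3 := (hs (n + 1) h).1
      push_cast at h1 ⊢
      linarith
  -- upper bounds by (reverse) induction
  have hub : ∀ d : ℕ, ∀ i : ℕ, i + d + 1 = K0 → tau i ≤ 1 - ((d : ℝ) + 1) * l := by
    intro d
    induction d with
    | zero =>
      intro i hi
      have hiK : i < K0 := by omega
      have hi' : K0 - 1 = i := by omega
      rw [hi'] at hend
      have := (hs i hiK).1
      push_cast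
      linarith
    | succ n ih =>
      intro i hi
      have h1 : (i + 1) + n + 1 = K0 := by omega
      have h2 := ih (i + 1) h1
      have hi1 : i + 1 < K0 := by omega
      have h3 := horder i hi1
      have h4 := (hs i (by omega)).1
      push_cast at h2 ⊢
      linarith
  -- positivity
  have hceil : (⌈(1 : ℝ) / r⌉ : ℝ) ≤ (⌊(1 : ℝ) / r⌋ : ℝ) + 1 := by
    exact_mod_cast Int.ceil_le_floor_add_one _
  have hKfloor : (K0 : ℝ) = (⌊(1 : ℝ) / r⌋ : ℝ) := by exact_mod_cast hK0
  have hpos : ((K0 : ℝ) + 1) * l - 1 > 0 := by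
    have h1 : 1 / l < (K0 : ℝ) + 1 := by rw [hKfloor]; linarith
    have h2 : 1 < ((K0 : ℝ) + 1) * l := (div_lt_iff₀ hl).mp h1
    linarith
  refine ⟨fun i hi => ?_, hpos⟩
  have hub' : tau i ≤ 1 - ((K0 : ℝ) - (i : ℝ)) * l := by
    have hd : i + (K0 - 1 - i) + 1 = K0 := by omega
    have := hub (K0 - 1 - i) i hd
    have hc : ((K0 - 1 - i : ℕ) : ℝ) + 1 = (K0 : ℝ) - (i : ℝ) := by
      have h5 : (K0 - 1 - i) + 1 + i = K0 := by omega
      have h6 := congrArg (Nat.cast : ℕ → ℝ) h5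
      push_cast at h6
      linarith
    rw [hc] at this
    exact this
  have hlb' := hlb i hi
  exact ⟨hub', hlb', Set.Icc_subset_Icc hub' hlb'⟩
end
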